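/- Let X₁, …, X_N be i.i.d. ℝ^d-valued random variables with law μ having finite second moment, and b̃: ℝ^d×ℝ^d → ℝ^d L-Lipschitz (in the pair). Then for each i, E | ∫ b̃(X_i, z) μ(dz) − N⁻¹ Σ_{j=1}^N b̃(X_i, X_j) | ≤ L (√2/√N + 2/N) (∫ |z|² μ(dz))^{1/2}. -/

import Mathlib

/-!
Write `K(x, z) = ∫ b(x, w) μ(dw) - b(x, z)`, so that the error equals `N⁻¹ ∑ⱼ K(Xᵢ, Xⱼ)`.
Since `‖K(x, z)‖ ≤ L (∫ ‖w‖ dμ + ‖z‖)`, the diagonal term `j = i` has mean at most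
`2 L ∫ ‖z‖ dμ ≤ 2 L (∫ ‖z‖² dμ)^{1/2}`.
For `j ≠ i` the terms `K(Xᵢ, Xⱼ)` are orthogonal in `L²`: for `j ≠ k` the inner product
`⟪K(Xᵢ, Xⱼ), K(Xᵢ, Xₖ)⟫` has mean zero because `Xₖ` is independent of `(Xᵢ, Xⱼ)` and
`K(x, ·)` is `μ`-centred. By Cauchy–Schwarz the off-diagonal sum therefore has mean at most
`(∑ⱼ E ‖K(Xᵢ, Xⱼ)‖²)^{1/2}`, and each summand is at most `L² ∫ ‖z‖² dμ`, the variance of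
`b(x, ·)` under `μ` being at most the second moment of `b(x, ·) - b(x, 0)`.
-/

open MeasureTheory ProbabilityTheory
open scoped InnerProductSpace

section SecondMoments

variable {Ω F : Type*} [MeasurableSpace Ω] {P : Measure Ω}
  [NormedAddCommGroup F] [InnerProductSpace ℝ F]

lemma integral_le_sqrt_integral_sq [IsProbabilityMeasure P] {f : Ω → ℝ} (hf : MemLp f 2 P) :
    ∫ ω, f ω ∂P ≤ √(∫ ω, f ω ^ 2 ∂P) := by
  have h := variance_eq_sub hf ▸ variance_nonneg f P
  exact (le_abs_self _).trans (Real.abs_le_sqrt (by simpa using h))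

lemma MeasureTheory.MemLp.integrable_inner {f g : Ω → F} (hf : MemLp f 2 P)
    (hg : MemLp g 2 P) : Integrable (fun ω => ⟪f ω, g ω⟫_ℝ) P :=
  (L2.integrable_inner (hf.toLp f) (hg.toLp g)).congr <|
    hf.coeFn_toLp.mp <| hg.coeFn_toLp.mono fun ω hgω hfω => by simp only [hfω, hgω]

lemma integral_norm_sub_integral_sq [CompleteSpace F] [IsProbabilityMeasure P] {W : Ω → F}
    (hW : MemLp W 2 P) :
    ∫ ω, ‖W ω - ∫ ω', W ω' ∂P‖ ^ 2 ∂P = ∫ ω, ‖W ω‖ ^ 2 ∂P - ‖∫ ω, W ω ∂P‖ ^ 2 := by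
  set a := ∫ ω, W ω ∂P
  have hW1 : Integrable W P := hW.integrable one_le_two
  have hW2 : Integrable (fun ω => ‖W ω‖ ^ 2) P := hW.integrable_norm_pow two_ne_zero
  have hinner : Integrable (fun ω => 2 * ⟪a, W ω⟫_ℝ) P := (hW1.const_inner a).const_mul 2
  have hsub : Integrable (fun ω => ‖W ω‖ ^ 2 - 2 * ⟪a, W ω⟫_ℝ) P := hW2.sub hinner
  calc ∫ ω, ‖W ω - a‖ ^ 2 ∂P = ∫ ω, (‖W ω‖ ^ 2 - 2 * ⟪a, W ω⟫_ℝ + ‖a‖ ^ 2) ∂P := by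
        congr 1 with ω
        rw [norm_sub_sq_real, real_inner_comm]
    _ = ∫ ω, ‖W ω‖ ^ 2 ∂P - 2 * ⟪a, a⟫_ℝ + ‖a‖ ^ 2 := by
        rw [integral_add hsub (integrable_const _), integral_sub hW2 hinner,
          integral_const_mul, integral_inner hW1, integral_const, probReal_univ, one_smul]
    _ = ∫ ω, ‖W ω‖ ^ 2 ∂P - ‖a‖ ^ 2 := by rw [real_inner_self_eq_norm_sq]; ring

lemma integral_norm_sum_sq_of_orthogonal {ι : Type*} (s : Finset ι) {g : ι → Ω → F}
    (hg : ∀ j ∈ s, MemLp (g j) 2 P)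
    (horth : ∀ j ∈ s, ∀ k ∈ s, j ≠ k → ∫ ω, ⟪g j ω, g k ω⟫_ℝ ∂P = 0) :
    ∫ ω, ‖∑ j ∈ s, g j ω‖ ^ 2 ∂P = ∑ j ∈ s, ∫ ω, ‖g j ω‖ ^ 2 ∂P := by
  have hint : ∀ j ∈ s, ∀ k ∈ s, Integrable (fun ω => ⟪g j ω, g k ω⟫_ℝ) P :=
    fun j hj k hk => (hg j hj).integrable_inner (hg k hk)
  calc ∫ ω, ‖∑ j ∈ s, g j ω‖ ^ 2 ∂P = ∫ ω, ∑ j ∈ s, ∑ k ∈ s, ⟪g j ω, g k ω⟫_ℝ ∂P := by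
        simp_rw [← real_inner_self_eq_norm_sq, sum_inner, inner_sum]
    _ = ∑ j ∈ s, ∑ k ∈ s, ∫ ω, ⟪g j ω, g k ω⟫_ℝ ∂P := by
        rw [integral_finsetSum _ fun j hj => integrable_finsetSum _ (hint j hj)]
        exact Finset.sum_congr rfl fun j hj => integral_finsetSum _ (hint j hj)
    _ = ∑ j ∈ s, ∫ ω, ‖g j ω‖ ^ 2 ∂P := by
        refine Finset.sum_congr rfl fun j hj => ?_
        rw [Finset.sum_eq_single_of_mem j hj fun k hk hkj => horth j hj k hk hkj.symm]
        simp_rw [real_inner_self_eq_norm_sq]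

lemma ProbabilityTheory.IndepFun.integral_comp_eq_integral_integral {α β E : Type*}
    [MeasurableSpace α] [MeasurableSpace β] [NormedAddCommGroup E] [NormedSpace ℝ E]
    [IsFiniteMeasure P] {Y : Ω → α} {Z : Ω → β} (hYZ : IndepFun Y Z P) (hY : Measurable Y)
    (hZ : Measurable Z) {h : α × β → E} (hh : Integrable h ((P.map Y).prod (P.map Z))) :
    ∫ ω, h (Y ω, Z ω) ∂P = ∫ y, ∫ z, h (y, z) ∂(P.map Z) ∂(P.map Y) := by
  have hmap := (indepFun_iff_map_prod_eq_prod_map_map hY.aemeasurable hZ.aemeasurable).1 hYZ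
  rw [← integral_prod h hh, ← hmap, integral_map (hY.prodMk hZ).aemeasurable
    (hmap ▸ hh.aestronglyMeasurable)]

end SecondMoments

section LipschitzKernel

variable {E F : Type*} [NormedAddCommGroup E] [NormedAddCommGroup F] {b : E → E → F} {L : ℝ}

def JointlyLipschitz (L : ℝ) (b : E → E → F) : Prop :=
  ∀ x x' z z', ‖b x z - b x' z'‖ ≤ L * (‖x - x'‖ + ‖z - z'‖)

lemma JointlyLipschitz.norm_sub_le_right (hb : JointlyLipschitz L b) (x z z' : E) :
    ‖b x z - b x z'‖ ≤ L * ‖z - z'‖ := by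
  simpa using hb x x z z'

lemma JointlyLipschitz.continuous_uncurry (hb : JointlyLipschitz L b) (hL : 0 ≤ L) :
    Continuous (Function.uncurry b) := by
  refine (LipschitzWith.of_dist_le' (K := 2 * L) fun p q => ?_).continuous
  rw [dist_eq_norm, Prod.dist_eq, dist_eq_norm, dist_eq_norm]
  calc _ ≤ L * (‖p.1 - q.1‖ + ‖p.2 - q.2‖) := hb _ _ _ _
    _ ≤ 2 * L * max ‖p.1 - q.1‖ ‖p.2 - q.2‖ := by
      nlinarith [le_max_left ‖p.1 - q.1‖ ‖p.2 - q.2‖, le_max_right ‖p.1 - q.1‖ ‖p.2 - q.2‖]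

variable [MeasurableSpace E] [OpensMeasurableSpace E] [SecondCountableTopology E]

lemma JointlyLipschitz.integrable_apply {μ : Measure E} [IsFiniteMeasure μ]
    (hb : JointlyLipschitz L b) (hμ : Integrable (fun z => ‖z‖) μ) (x : E) :
    Integrable (b x) μ := by
  have hcont : Continuous (b x) :=
    (LipschitzWith.of_dist_le' fun z z' => by
      simpa only [dist_eq_norm] using hb.norm_sub_le_right x z z').continuous
  refine ((integrable_const ‖b x 0‖).add (hμ.const_mul L)).mono' hcont.aestronglyMeasurable
    (ae_of_all _ fun z => ?_)
  calc ‖b x z‖ ≤ ‖b x 0‖ + ‖b x z - b x 0‖ := norm_le_insert' _ _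
    _ ≤ ‖b x 0‖ + L * ‖z‖ := by simpa using hb.norm_sub_le_right x z 0

variable [NormedSpace ℝ F]

noncomputable def centeredKernel (b : E → E → F) (μ : Measure E) (x z : E) : F :=
  ∫ w, b x w ∂μ - b x z

variable {μ : Measure E} [IsProbabilityMeasure μ]

lemma continuous_uncurry_centeredKernel (hb : JointlyLipschitz L b) (hL : 0 ≤ L)
    (hμ : Integrable (fun z => ‖z‖) μ) :
    Continuous (Function.uncurry (centeredKernel b μ)) := by
  have hmean : LipschitzWith L.toNNReal fun x => ∫ z, b x z ∂μ := by
    refine LipschitzWith.of_dist_le' fun x x' => ?_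
    rw [dist_eq_norm, dist_eq_norm, ← integral_sub (hb.integrable_apply hμ x)
      (hb.integrable_apply hμ x')]
    calc ‖∫ z, (b x z - b x' z) ∂μ‖ ≤ ∫ _z, L * ‖x - x'‖ ∂μ :=
          norm_integral_le_of_norm_le (integrable_const _)
            (ae_of_all _ fun z => by simpa using hb x x' z z)
      _ = L * ‖x - x'‖ := by simp
  exact (hmean.continuous.comp continuous_fst).sub (hb.continuous_uncurry hL)

lemma integrable_centeredKernel (hb : JointlyLipschitz L b)
    (hμ : Integrable (fun z => ‖z‖) μ) (x : E) : Integrable (centeredKernel b μ x) μ :=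
  (integrable_const _).sub (hb.integrable_apply hμ x)

variable [CompleteSpace F]

lemma integral_centeredKernel (hb : JointlyLipschitz L b)
    (hμ : Integrable (fun z => ‖z‖) μ) (x : E) : ∫ z, centeredKernel b μ x z ∂μ = 0 := by
  unfold centeredKernel
  rw [integral_sub (integrable_const _) (hb.integrable_apply hμ x),
    integral_const, probReal_univ, one_smul, sub_self]

lemma norm_centeredKernel_le (hb : JointlyLipschitz L b) (hL : 0 ≤ L)
    (hμ : Integrable (fun z => ‖z‖) μ) (x z : E) :
    ‖centeredKernel b μ x z‖ ≤ L * (∫ w, ‖w‖ ∂μ + ‖z‖) := by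
  have hK : centeredKernel b μ x z = ∫ w, (b x w - b x z) ∂μ := by
    rw [centeredKernel, integral_sub (hb.integrable_apply hμ x) (integrable_const _),
      integral_const, probReal_univ, one_smul]
  have hbound : L * (∫ w, ‖w‖ ∂μ + ‖z‖) = ∫ w, L * (‖w‖ + ‖z‖) ∂μ := by
    rw [integral_const_mul, integral_add hμ (integrable_const _), integral_const, probReal_univ,
      one_smul]
  rw [hK, hbound]
  refine norm_integral_le_of_norm_le (by fun_prop) (ae_of_all _ fun w => ?_)
  calc ‖b x w - b x z‖ ≤ L * ‖w - z‖ := hb.norm_sub_le_right x w z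
    _ ≤ L * (‖w‖ + ‖z‖) := by gcongr; exact norm_sub_le w z

end LipschitzKernel

lemma sub_inv_smul_sum_eq {V κ : Type*} [AddCommGroup V] [Module ℝ V] [Fintype κ]
    [Nonempty κ] (c : V) (v : κ → V) :
    c - (Fintype.card κ : ℝ)⁻¹ • ∑ j, v j = (Fintype.card κ : ℝ)⁻¹ • ∑ j, (c - v j) := by
  rw [Finset.sum_sub_distrib, Finset.sum_const, Finset.card_univ, ← Nat.cast_smul_eq_nsmul ℝ,
    smul_sub, smul_smul, inv_mul_cancel₀ (Nat.cast_ne_zero.2 Fintype.card_ne_zero), one_smul]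

section Sample

variable {Ω E F ι : Type*} [MeasurableSpace Ω] {P : Measure Ω}
  [NormedAddCommGroup E] [MeasurableSpace E] [BorelSpace E] [SecondCountableTopology E]
  [NormedAddCommGroup F] [InnerProductSpace ℝ F] [CompleteSpace F]
  {μ : Measure E} [IsProbabilityMeasure μ] {b : E → E → F} {L : ℝ} {X : ι → Ω → E}

lemma integral_norm_centeredKernel_sq_le (hb : JointlyLipschitz L b) (hμ : MemLp id 2 μ)
    (x : E) : ∫ z, ‖centeredKernel b μ x z‖ ^ 2 ∂μ ≤ L ^ 2 * ∫ z, ‖z‖ ^ 2 ∂μ := by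
  have hμ1 : Integrable (fun z => ‖z‖) μ := (hμ.integrable one_le_two).norm
  have hW : ∀ z, ‖b x z - b x 0‖ ≤ L * ‖z‖ := fun z => by
    simpa using hb.norm_sub_le_right x z 0
  have hWint : Integrable (fun z => b x z - b x 0) μ :=
    (hb.integrable_apply hμ1 x).sub (integrable_const _)
  have hWLp : MemLp (fun z => b x z - b x 0) 2 μ :=
    (hμ.norm.const_mul L).of_le hWint.aestronglyMeasurable (ae_of_all _ fun z =>
      (hW z).trans (by simpa [abs_mul] using
        mul_le_mul_of_nonneg_right (le_abs_self L) (norm_nonneg z)))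
  have hK : ∀ z, ‖centeredKernel b μ x z‖
      = ‖(b x z - b x 0) - ∫ w, (b x w - b x 0) ∂μ‖ := fun z => by
    rw [centeredKernel, norm_sub_rev, integral_sub (hb.integrable_apply hμ1 x)
      (integrable_const _), integral_const, probReal_univ, one_smul, sub_sub_sub_cancel_right]
  simp_rw [hK]
  rw [integral_norm_sub_integral_sq hWLp, ← integral_const_mul]
  refine (sub_le_self _ (sq_nonneg _)).trans (integral_mono
    (hWLp.integrable_norm_pow two_ne_zero)
    ((hμ.integrable_norm_pow two_ne_zero).const_mul _) fun z => ?_)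
  rw [← mul_pow]
  exact pow_le_pow_left₀ (norm_nonneg _) (hW z) 2

lemma memLp_centeredKernel_comp [IsProbabilityMeasure P] (hb : JointlyLipschitz L b)
    (hL : 0 ≤ L) (hμ : MemLp id 2 μ) (hX : ∀ i, Measurable (X i))
    (hlaw : ∀ i, P.map (X i) = μ) (i j : ι) :
    MemLp (fun ω => centeredKernel b μ (X i ω) (X j ω)) 2 P := by
  have hμ1 : Integrable (fun z => ‖z‖) μ := (hμ.integrable one_le_two).norm
  have hXj : MemLp (X j) 2 P := by
    rw [← hlaw j] at hμ
    exact (memLp_map_measure_iff aestronglyMeasurable_id (hX j).aemeasurable).1 hμ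
  have hbound : MemLp (fun ω => L * (∫ w, ‖w‖ ∂μ + ‖X j ω‖)) 2 P :=
    ((memLp_const (∫ w, ‖w‖ ∂μ)).add hXj.norm).const_mul L
  have hmeas : AEStronglyMeasurable (fun ω => centeredKernel b μ (X i ω) (X j ω)) P :=
    (continuous_uncurry_centeredKernel hb hL hμ1).comp_aestronglyMeasurable
      ((hX i).prodMk (hX j)).aestronglyMeasurable
  refine hbound.of_le hmeas (ae_of_all _ fun ω => ?_)
  rw [Real.norm_eq_abs]
  exact (norm_centeredKernel_le hb hL hμ1 _ _).trans (le_abs_self _)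

lemma integral_norm_centeredKernel_comp_sq_le [IsProbabilityMeasure P]
    (hb : JointlyLipschitz L b) (hL : 0 ≤ L) (hμ : MemLp id 2 μ) (hX : ∀ i, Measurable (X i))
    (hindep : iIndepFun X P) (hlaw : ∀ i, P.map (X i) = μ) {i j : ι} (hij : i ≠ j) :
    ∫ ω, ‖centeredKernel b μ (X i ω) (X j ω)‖ ^ 2 ∂P ≤ L ^ 2 * ∫ z, ‖z‖ ^ 2 ∂μ := by
  have hμ1 : Integrable (fun z => ‖z‖) μ := (hμ.integrable one_le_two).norm
  have hcont := continuous_uncurry_centeredKernel hb hL hμ1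
  have hbound : Integrable (fun z => (L * (∫ w, ‖w‖ ∂μ + ‖z‖)) ^ 2) μ :=
    (((memLp_const (∫ w, ‖w‖ ∂μ)).add hμ.norm).const_mul L).integrable_sq
  have hint : Integrable (fun p : E × E => ‖centeredKernel b μ p.1 p.2‖ ^ 2) (μ.prod μ) := by
    refine (hbound.comp_snd μ).mono' (hcont.norm.pow 2).aestronglyMeasurable
      (ae_of_all _ fun p => ?_)
    rw [Real.norm_eq_abs, abs_of_nonneg (sq_nonneg _)]
    exact pow_le_pow_left₀ (norm_nonneg _) (norm_centeredKernel_le hb hL hμ1 _ _) 2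
  rw [(hindep.indepFun hij).integral_comp_eq_integral_integral (hX i) (hX j)
    (h := fun p => ‖centeredKernel b μ p.1 p.2‖ ^ 2) (by rwa [hlaw i, hlaw j]), hlaw i, hlaw j]
  calc ∫ x, ∫ z, ‖centeredKernel b μ x z‖ ^ 2 ∂μ ∂μ ≤ ∫ _x, L ^ 2 * ∫ z, ‖z‖ ^ 2 ∂μ ∂μ :=
        integral_mono hint.integral_prod_left (integrable_const _)
          (integral_norm_centeredKernel_sq_le hb hμ)
    _ = L ^ 2 * ∫ z, ‖z‖ ^ 2 ∂μ := by simp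

lemma integral_inner_centeredKernel_comp_eq_zero [IsProbabilityMeasure P]
    (hb : JointlyLipschitz L b) (hL : 0 ≤ L) (hμ : MemLp id 2 μ) (hX : ∀ i, Measurable (X i))
    (hindep : iIndepFun X P) (hlaw : ∀ i, P.map (X i) = μ) {i j k : ι} (hik : i ≠ k)
    (hjk : j ≠ k) :
    ∫ ω, ⟪centeredKernel b μ (X i ω) (X j ω), centeredKernel b μ (X i ω) (X k ω)⟫_ℝ ∂P = 0 := by
  have hμ1 : Integrable (fun z => ‖z‖) μ := (hμ.integrable one_le_two).norm
  have hcont := continuous_uncurry_centeredKernel hb hL hμ1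
  have hY : Measurable fun ω => (X i ω, X j ω) := (hX i).prodMk (hX j)
  set h : (E × E) × E → ℝ := fun q =>
    ⟪centeredKernel b μ q.1.1 q.1.2, centeredKernel b μ q.1.1 q.2⟫_ℝ
  have hfirst : Integrable (fun y : E × E => ‖centeredKernel b μ y.1 y.2‖)
      (P.map fun ω => (X i ω, X j ω)) :=
    (integrable_map_measure hcont.norm.aestronglyMeasurable hY.aemeasurable).2
      ((memLp_centeredKernel_comp hb hL hμ hX hlaw i j).integrable one_le_two).norm
  have hsecond : Integrable (fun z => L * (∫ w, ‖w‖ ∂μ + ‖z‖)) μ :=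
    ((integrable_const _).add hμ1).const_mul L
  have hint : Integrable h ((P.map fun ω => (X i ω, X j ω)).prod (P.map (X k))) := by
    rw [hlaw k]
    refine (hfirst.mul_prod hsecond).mono'
      ((hcont.comp continuous_fst).inner (hcont.comp
        ((continuous_fst.comp continuous_fst).prodMk continuous_snd))).aestronglyMeasurable
      (ae_of_all _ fun q => ?_)
    refine (abs_real_inner_le_norm _ _).trans ?_
    exact mul_le_mul_of_nonneg_left (norm_centeredKernel_le hb hL hμ1 _ _) (norm_nonneg _)
  rw [(hindep.indepFun_prodMk hX i j k hik hjk).integral_comp_eq_integral_integral hY (hX k)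
    hint]
  refine integral_eq_zero_of_ae (ae_of_all _ fun y => ?_)
  simp only [h, hlaw k, Pi.zero_apply]
  rw [integral_inner (integrable_centeredKernel hb hμ1 y.1), integral_centeredKernel hb hμ1,
    inner_zero_right]

lemma integral_norm_centeredKernel_diag_le (hb : JointlyLipschitz L b) (hL : 0 ≤ L)
    (hμ : MemLp id 2 μ) (hX : ∀ i, Measurable (X i)) (hlaw : ∀ i, P.map (X i) = μ) (i : ι) :
    ∫ ω, ‖centeredKernel b μ (X i ω) (X i ω)‖ ∂P ≤ 2 * L * √(∫ z, ‖z‖ ^ 2 ∂μ) := by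
  have hμ1 : Integrable (fun z => ‖z‖) μ := (hμ.integrable one_le_two).norm
  have hcont : Continuous fun x => ‖centeredKernel b μ x x‖ :=
    ((continuous_uncurry_centeredKernel hb hL hμ1).comp
      (continuous_id.prodMk continuous_id)).norm
  have hfirst : ∫ z, ‖z‖ ∂μ ≤ √(∫ z, ‖z‖ ^ 2 ∂μ) := integral_le_sqrt_integral_sq hμ.norm
  rw [← integral_map (hX i).aemeasurable (f := fun x => ‖centeredKernel b μ x x‖)
    (by rw [hlaw i]; exact hcont.aestronglyMeasurable), hlaw i]
  calc ∫ x, ‖centeredKernel b μ x x‖ ∂μ ≤ ∫ x, L * (∫ w, ‖w‖ ∂μ + ‖x‖) ∂μ :=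
        integral_mono_of_nonneg (ae_of_all _ fun _ => norm_nonneg _)
          (((integrable_const _).add hμ1).const_mul L)
          (ae_of_all _ fun x => norm_centeredKernel_le hb hL hμ1 x x)
    _ = 2 * L * ∫ z, ‖z‖ ∂μ := by
        rw [integral_const_mul, integral_add (integrable_const _) hμ1, integral_const,
          probReal_univ, one_smul]
        ring
    _ ≤ 2 * L * √(∫ z, ‖z‖ ^ 2 ∂μ) := by gcongr

lemma integral_norm_sum_centeredKernel_comp_le [IsProbabilityMeasure P]
    (hb : JointlyLipschitz L b) (hL : 0 ≤ L) (hμ : MemLp id 2 μ) (hX : ∀ i, Measurable (X i))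
    (hindep : iIndepFun X P) (hlaw : ∀ i, P.map (X i) = μ) {i : ι} {s : Finset ι}
    (hi : i ∉ s) :
    ∫ ω, ‖∑ j ∈ s, centeredKernel b μ (X i ω) (X j ω)‖ ∂P
      ≤ √(s.card : ℝ) * L * √(∫ z, ‖z‖ ^ 2 ∂μ) := by
  have hLp : ∀ j ∈ s, MemLp (fun ω => centeredKernel b μ (X i ω) (X j ω)) 2 P :=
    fun j _ => memLp_centeredKernel_comp hb hL hμ hX hlaw i j
  have hne : ∀ j ∈ s, i ≠ j := fun j hj hij => hi (hij ▸ hj)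
  calc ∫ ω, ‖∑ j ∈ s, centeredKernel b μ (X i ω) (X j ω)‖ ∂P
      ≤ √(∫ ω, ‖∑ j ∈ s, centeredKernel b μ (X i ω) (X j ω)‖ ^ 2 ∂P) :=
        integral_le_sqrt_integral_sq (memLp_finsetSum s hLp).norm
    _ = √(∑ j ∈ s, ∫ ω, ‖centeredKernel b μ (X i ω) (X j ω)‖ ^ 2 ∂P) := by
        rw [integral_norm_sum_sq_of_orthogonal s hLp fun j hj k hk hjk =>
          integral_inner_centeredKernel_comp_eq_zero hb hL hμ hX hindep hlaw (hne k hk) hjk]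
    _ ≤ √(∑ _j ∈ s, L ^ 2 * ∫ z, ‖z‖ ^ 2 ∂μ) := by
        gcongr with j hj
        exact integral_norm_centeredKernel_comp_sq_le hb hL hμ hX hindep hlaw (hne j hj)
    _ = √(s.card : ℝ) * L * √(∫ z, ‖z‖ ^ 2 ∂μ) := by
        rw [Finset.sum_const, nsmul_eq_mul, Real.sqrt_mul (Nat.cast_nonneg _),
          Real.sqrt_mul (sq_nonneg L), Real.sqrt_sq hL, mul_assoc]

lemma integral_norm_integral_sub_average_le [Fintype ι] [IsProbabilityMeasure P]
    (hb : JointlyLipschitz L b) (hL : 0 ≤ L) (hμ : MemLp id 2 μ) (hX : ∀ i, Measurable (X i))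
    (hindep : iIndepFun X P) (hlaw : ∀ i, P.map (X i) = μ) (i : ι) :
    ∫ ω, ‖∫ z, b (X i ω) z ∂μ - (Fintype.card ι : ℝ)⁻¹ • ∑ j, b (X i ω) (X j ω)‖ ∂P
      ≤ (Fintype.card ι : ℝ)⁻¹ * (2 * L * √(∫ z, ‖z‖ ^ 2 ∂μ)
        + √(Fintype.card ι : ℝ) * L * √(∫ z, ‖z‖ ^ 2 ∂μ)) := by
  classical
  have : Nonempty ι := ⟨i⟩
  set K := centeredKernel b μ
  set s := Finset.univ.erase i
  have hsplit : ∀ ω, ∫ z, b (X i ω) z ∂μ - (Fintype.card ι : ℝ)⁻¹ • ∑ j, b (X i ω) (X j ω)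
      = (Fintype.card ι : ℝ)⁻¹ • (K (X i ω) (X i ω) + ∑ j ∈ s, K (X i ω) (X j ω)) := by
    intro ω
    rw [sub_inv_smul_sum_eq, Finset.add_sum_erase _ (fun j => K (X i ω) (X j ω))
      (Finset.mem_univ i)]
    rfl
  have hint : ∀ j, Integrable (fun ω => K (X i ω) (X j ω)) P := fun j =>
    (memLp_centeredKernel_comp hb hL hμ hX hlaw i j).integrable one_le_two
  have hsum : Integrable (fun ω => ∑ j ∈ s, K (X i ω) (X j ω)) P :=
    integrable_finsetSum s fun j _ => hint j
  have hcard : √(s.card : ℝ) ≤ √(Fintype.card ι : ℝ) :=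
    Real.sqrt_le_sqrt (by exact_mod_cast Finset.card_le_univ s)
  simp_rw [hsplit, norm_smul, norm_inv, Real.norm_natCast, integral_const_mul]
  gcongr
  calc ∫ ω, ‖K (X i ω) (X i ω) + ∑ j ∈ s, K (X i ω) (X j ω)‖ ∂P
      ≤ ∫ ω, (‖K (X i ω) (X i ω)‖ + ‖∑ j ∈ s, K (X i ω) (X j ω)‖) ∂P :=
        integral_mono ((hint i).add hsum).norm ((hint i).norm.add hsum.norm)
          fun ω => norm_add_le _ _
    _ = (∫ ω, ‖K (X i ω) (X i ω)‖ ∂P) + ∫ ω, ‖∑ j ∈ s, K (X i ω) (X j ω)‖ ∂P :=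
        integral_add (hint i).norm hsum.norm
    _ ≤ 2 * L * √(∫ z, ‖z‖ ^ 2 ∂μ) + √(s.card : ℝ) * L * √(∫ z, ‖z‖ ^ 2 ∂μ) :=
        add_le_add (integral_norm_centeredKernel_diag_le hb hL hμ hX hlaw i)
          (integral_norm_sum_centeredKernel_comp_le hb hL hμ hX hindep hlaw
            (Finset.notMem_erase i Finset.univ))
    _ ≤ 2 * L * √(∫ z, ‖z‖ ^ 2 ∂μ) + √(Fintype.card ι : ℝ) * L * √(∫ z, ‖z‖ ^ 2 ∂μ) := by
        gcongr

end Sample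

theorem stmt10_general (d N : ℕ) (L : ℝ) (hL : 0 < L)
    {Ω : Type*} [MeasureSpace Ω] [IsProbabilityMeasure (ℙ : Measure Ω)]
    (μ : Measure (EuclideanSpace ℝ (Fin d))) [IsProbabilityMeasure μ]
    (hmom : Integrable (fun z => ‖z‖^2) μ)
    (X : Fin N → Ω → EuclideanSpace ℝ (Fin d))
    (hmeas : ∀ i, Measurable (X i))
    (hindep : iIndepFun X ℙ)
    (hlaw : ∀ i, Measure.map (X i) ℙ = μ)
    (btil : EuclideanSpace ℝ (Fin d) → EuclideanSpace ℝ (Fin d) → EuclideanSpace ℝ (Fin d))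
    (hLip : ∀ x x' z z', ‖btil x z - btil x' z'‖ ≤ L * (‖x - x'‖ + ‖z - z'‖)) :
    ∀ i : Fin N,
      (∫ ω, ‖(∫ z, btil (X i ω) z ∂μ) - (N : ℝ)⁻¹ • ∑ j, btil (X i ω) (X j ω)‖) ≤
        L * (Real.sqrt 2 / Real.sqrt N + 2 / N) * Real.sqrt (∫ z, ‖z‖^2 ∂μ) := by
  intro i
  have hμ : MemLp id 2 μ := (memLp_two_iff_integrable_sq_norm aestronglyMeasurable_id).2 hmom
  have hsqrt : (N : ℝ)⁻¹ * √N ≤ √2 / √N := by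
    rw [inv_mul_eq_div, Real.sqrt_div_self']
    gcongr
    exact Real.one_le_sqrt.2 one_le_two
  have hbound := integral_norm_integral_sub_average_le hLip hL.le hμ hmeas hindep hlaw i
  rw [Fintype.card_fin] at hbound
  calc _ ≤ _ := hbound
    _ = L * ((N : ℝ)⁻¹ * √N + 2 / N) * √(∫ z, ‖z‖ ^ 2 ∂μ) := by ring
    _ ≤ L * (√2 / √N + 2 / N) * √(∫ z, ‖z‖ ^ 2 ∂μ) := by gcongr

theorem stmt10 (d N : ℕ) (hN : 1 ≤ N) (L : ℝ) (hL : 0 < L)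
    {Ω : Type*} [MeasureSpace Ω] [IsProbabilityMeasure (ℙ : Measure Ω)]
    (μ : Measure (EuclideanSpace ℝ (Fin d))) [IsProbabilityMeasure μ]
    (hmom : Integrable (fun z => ‖z‖^2) μ)
    (X : Fin N → Ω → EuclideanSpace ℝ (Fin d))
    (hmeas : ∀ i, Measurable (X i))
    (hindep : iIndepFun X ℙ)
    (hlaw : ∀ i, Measure.map (X i) ℙ = μ)
    (btil : EuclideanSpace ℝ (Fin d) → EuclideanSpace ℝ (Fin d) → EuclideanSpace ℝ (Fin d))
    (hLip : ∀ x x' z z', ‖btil x z - btil x' z'‖ ≤ L * (‖x - x'‖ + ‖z - z'‖)) :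
    ∀ i : Fin N,
      (∫ ω, ‖(∫ z, btil (X i ω) z ∂μ) - (N : ℝ)⁻¹ • ∑ j, btil (X i ω) (X j ω)‖) ≤
        L * (Real.sqrt 2 / Real.sqrt N + 2 / N) * Real.sqrt (∫ z, ‖z‖^2 ∂μ) :=
  stmt10_general d N L hL μ hmom X hmeas hindep hlaw btil hLip
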